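/- arXiv:2210.05007 — 2 statements merged into one kernel-verified Lean document; each statement's English description precedes it below -/
import Mathlib

section
/- Let ξ > 0, let M ≥ 1 be an integer, and let E satisfy 0 ≤ E ≤ (1+ξ)/(1+3ξ). Then the minimum value of f_{M,ξ}(p) over all vectors p = (p_0, …, p_M) ∈ ℝ^{M+1} satisfying p_n ≥ 0 for all n, ∑_{n=0}^{M} p_n = 1, and ∑_{n=0}^{M} n·p_n ≤ E, equals (1/(1+ξ)) [ 1 − 2(ξ/(1+ξ))E + 2(ξ/(1+ξ))^2 E^2 ]. In particular, this value is independent of M. -/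
open Finset

/-- The objective function `f_{M,ξ}` of the unidirectional teleportation optimization:
`f_{M,ξ}(p) = (1/(1+ξ)) [ (∑_{n=0}^{M} p_n/(1+ξ)^n)^2 + (∑_{n=1}^{M} p_n ξ/(1+ξ)^n)^2 ]`. -/
noncomputable def fUni (M : ℕ) (ξ : ℝ) (p : Fin (M + 1) → ℝ) : ℝ :=
  (1 / (1 + ξ)) *
    ((∑ n : Fin (M + 1), p n / (1 + ξ) ^ (n : ℕ)) ^ 2 +
      (∑ n : Fin (M + 1), if 1 ≤ (n : ℕ) then p n * ξ / (1 + ξ) ^ (n : ℕ) else 0) ^ 2)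

/-- Feasibility: `p_n ≥ 0`, `∑ p_n = 1`, `∑ n p_n ≤ E`. -/
def FeasibleUni (M : ℕ) (E : ℝ) (p : Fin (M + 1) → ℝ) : Prop :=
  (∀ n, 0 ≤ p n) ∧ (∑ n, p n = 1) ∧ (∑ n : Fin (M + 1), ((n : ℕ) : ℝ) * p n ≤ E)

/-!
Put `t = ξE/(1+ξ)` and write `A`, `B` for the two sums in `f_{M,ξ}`. The two-point distribution
`p₀ = 1 - E`, `p₁ = E` gives `A = 1 - t`, `B = t`. Conversely, for feasible `p` the combination
`(1-t)A + tB` is `∑ pₙ wₙ` with weights `w₀ = 1 - t` and `wₙ = (1 - t + tξ)/(1+ξ)ⁿ` for `n ≥ 1`.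
By Bernoulli's inequality the `wₙ` lie above the line through `w₀` and `w₁` as soon as
`w₁ ≤ 1 - 2t`, which is the condition `t(1+3ξ) ≤ ξ`, i.e. `E ≤ (1+ξ)/(1+3ξ)`. That line has
slope `-(ξ/(1+ξ))(1-2t) ≤ 0`, so the first-moment bound gives `(1-t)A + tB ≥ (1-t)² + t²`,
and Cauchy–Schwarz turns this into `A² + B² ≥ (1-t)² + t²`.
-/

lemma sq_add_sq_le_sq_add_sq_of_le_mul_add_mul {a b x y : ℝ}
    (h : a ^ 2 + b ^ 2 ≤ a * x + b * y) : a ^ 2 + b ^ 2 ≤ x ^ 2 + y ^ 2 := by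
  nlinarith [sq_nonneg (a - x), sq_nonneg (b - y)]

lemma mul_one_sub_mul_le_pow_succ {r : ℝ} (hr : 0 ≤ r) (n : ℕ) :
    r * (1 - n * (1 - r)) ≤ r ^ (n + 1) := by
  have h := one_add_mul_le_pow (a := r - 1) (by linarith) n
  rw [add_sub_cancel] at h
  rw [pow_succ']
  exact mul_le_mul_of_nonneg_left (by linarith) hr

lemma line_le_discounted_weight {ξ t : ℝ} (hξ : 0 < ξ) (ht0 : 0 ≤ t) (ht : t * (1 + 3 * ξ) ≤ ξ)
    (n : ℕ) :
    (1 - t) - n * (ξ / (1 + ξ)) * (1 - 2 * t) ≤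
      ((1 - t) + if 1 ≤ n then t * ξ else 0) / (1 + ξ) ^ n := by
  rcases n with _ | m
  · simp
  have hs : 0 < 1 + ξ := by linarith
  have hs0 : 0 ≤ ξ / (1 + ξ) := by positivity
  have ht1 : t ≤ 1 := by nlinarith
  set c := (1 - t + t * ξ) / (1 + ξ)
  have hc : c = (1 - t) - ξ / (1 + ξ) * (1 - 2 * t) := by simp only [c]; field_simp; ring
  have hc1 : c ≤ 1 - 2 * t := by rw [div_le_iff₀ hs]; linarith
  have hbern := mul_one_sub_mul_le_pow_succ (r := 1 / (1 + ξ)) (by positivity) m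
  have hr : 1 - 1 / (1 + ξ) = ξ / (1 + ξ) := by field_simp; ring
  rw [hr] at hbern
  calc (1 - t) - ((m + 1 : ℕ) : ℝ) * (ξ / (1 + ξ)) * (1 - 2 * t)
      ≤ c * (1 - m * (ξ / (1 + ξ))) := by
        push_cast; nlinarith [mul_nonneg (Nat.cast_nonneg m) hs0]
    _ = (1 - t + t * ξ) * (1 / (1 + ξ) * (1 - m * (ξ / (1 + ξ)))) := by simp only [c]; ring
    _ ≤ (1 - t + t * ξ) * (1 / (1 + ξ)) ^ (m + 1) :=
        mul_le_mul_of_nonneg_left hbern (by nlinarith)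
    _ = _ := by rw [if_pos (Nat.le_add_left 1 m), one_div_pow]; ring

lemma sq_add_sq_le_linear_combination_of_first_moment_le {M : ℕ} {ξ t : ℝ} (hξ : 0 < ξ)
    (ht0 : 0 ≤ t) (ht : t * (1 + 3 * ξ) ≤ ξ) {p : Fin (M + 1) → ℝ} (hp0 : ∀ n, 0 ≤ p n)
    (hp1 : ∑ n, p n = 1) (hpt : ξ / (1 + ξ) * ∑ n : Fin (M + 1), ((n : ℕ) : ℝ) * p n ≤ t) :
    (1 - t) ^ 2 + t ^ 2 ≤
      (1 - t) * ∑ n : Fin (M + 1), p n / (1 + ξ) ^ (n : ℕ) +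
        t * ∑ n : Fin (M + 1), if 1 ≤ (n : ℕ) then p n * ξ / (1 + ξ) ^ (n : ℕ) else 0 := by
  have ht2 : 2 * t ≤ 1 := by nlinarith
  calc (1 - t) ^ 2 + t ^ 2
      ≤ (1 - t) - (1 - 2 * t) * (ξ / (1 + ξ) * ∑ n : Fin (M + 1), ((n : ℕ) : ℝ) * p n) := by
        nlinarith
    _ = ∑ n : Fin (M + 1), p n * ((1 - t) - (n : ℕ) * (ξ / (1 + ξ)) * (1 - 2 * t)) := by
        have hconst : 1 - t = ∑ n, (1 - t) * p n := by rw [← mul_sum, hp1, mul_one]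
        rw [mul_sum, mul_sum]
        conv_lhs => rw [hconst, ← sum_sub_distrib]
        exact sum_congr rfl fun n _ => by ring
    _ ≤ ∑ n : Fin (M + 1),
          p n * (((1 - t) + if 1 ≤ (n : ℕ) then t * ξ else 0) / (1 + ξ) ^ (n : ℕ)) :=
        sum_le_sum fun n _ =>
          mul_le_mul_of_nonneg_left (line_le_discounted_weight hξ ht0 ht n) (hp0 n)
    _ = _ := by
        rw [mul_sum, mul_sum, ← sum_add_distrib]
        exact sum_congr rfl fun n _ => by split_ifs <;> ring

def twoPointDist (E : ℝ) (n : ℕ) : ℝ := if n = 0 then 1 - E else if n = 1 then E else 0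

lemma feasibleUni_twoPointDist {M : ℕ} {E : ℝ} (hM : 1 ≤ M) (hE0 : 0 ≤ E) (hE1 : E ≤ 1) :
    FeasibleUni M E (fun n => twoPointDist E n) := by
  obtain ⟨m, rfl⟩ := Nat.exists_eq_add_of_le' hM
  refine ⟨fun n => ?_, by simp [twoPointDist, Fin.sum_univ_succ],
    by simp [twoPointDist, Fin.sum_univ_succ]⟩
  dsimp only [twoPointDist]
  split_ifs <;> linarith

lemma fUni_twoPointDist {M : ℕ} {ξ : ℝ} (E : ℝ) (hM : 1 ≤ M) (hξ : 1 + ξ ≠ 0) :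
    fUni M ξ (fun n => twoPointDist E n) =
      1 / (1 + ξ) * ((1 - ξ / (1 + ξ) * E) ^ 2 + (ξ / (1 + ξ) * E) ^ 2) := by
  obtain ⟨m, rfl⟩ := Nat.exists_eq_add_of_le' hM
  rw [fUni]
  congr 1
  simp only [twoPointDist, Fin.val_eq_zero_iff, Fin.sum_univ_succ, ↓reduceIte,
    Fin.coe_ofNat_eq_mod, Nat.zero_mod, pow_zero, div_one, Fin.succ_ne_zero, Fin.val_succ,
    Nat.add_eq_right, zero_add, pow_one, zero_div, sum_const_zero, add_zero, ite_mul, zero_mul,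
    nonpos_iff_eq_zero, one_ne_zero, le_add_iff_nonneg_left, zero_le]
  field_simp
  ring

theorem unidirectional_optimal_value (ξ E : ℝ) (M : ℕ) (hξ : 0 < ξ)
    (hM : 1 ≤ M) (hE0 : 0 ≤ E) (hE : E ≤ (1 + ξ) / (1 + 3 * ξ)) :
    IsLeast {y : ℝ | ∃ p : Fin (M + 1) → ℝ, FeasibleUni M E p ∧ fUni M ξ p = y}
      ((1 / (1 + ξ)) * (1 - 2 * (ξ / (1 + ξ)) * E + 2 * (ξ / (1 + ξ)) ^ 2 * E ^ 2)) := by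
  have hs : 0 < 1 + ξ := by linarith
  have hE' : E * (1 + 3 * ξ) ≤ 1 + ξ := (le_div_iff₀ (by linarith)).1 hE
  set t := ξ / (1 + ξ) * E with ht
  have ht0 : 0 ≤ t := by positivity
  have ht1 : t * (1 + 3 * ξ) ≤ ξ := by
    rw [ht, div_mul_eq_mul_div, div_mul_eq_mul_div, div_le_iff₀ hs]; nlinarith
  rw [show 1 - 2 * (ξ / (1 + ξ)) * E + 2 * (ξ / (1 + ξ)) ^ 2 * E ^ 2 = (1 - t) ^ 2 + t ^ 2 by ring]
  refine ⟨⟨_, feasibleUni_twoPointDist hM hE0 (by nlinarith), fUni_twoPointDist E hM hs.ne'⟩, ?_⟩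
  rintro _ ⟨p, ⟨hp0, hp1, hpE⟩, rfl⟩
  have hpt := mul_le_mul_of_nonneg_left hpE (div_pos hξ hs).le
  exact mul_le_mul_of_nonneg_left (sq_add_sq_le_sq_add_sq_of_le_mul_add_mul
    (sq_add_sq_le_linear_combination_of_first_moment_le hξ ht0 ht1 hp0 hp1 hpt)) (by positivity)
end

section
/- Let η ∈ (0, 1) and let m, n, r, s be nonnegative integers with m+n ≥ 2 and r+s ≥ 2. Then Γ_{m,n,r,s,η} > 0. -/
open Finset

/-- `T_η^{ab} = ∑_{k=0}^{min(a,b)} C(a,k) C(b,k) (1−η)^{2k} η^{a+b−2k}`. -/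
noncomputable def Tcoef (η : ℝ) (a b : ℕ) : ℝ :=
  ∑ k ∈ Finset.range (min a b + 1),
    (a.choose k : ℝ) * (b.choose k : ℝ) * (1 - η) ^ (2 * k) * η ^ (a + b - 2 * k)

/-- The coefficient `Γ_{m,n,r,s,η}` from the bidirectional teleportation optimization. -/
noncomputable def Gamma (η : ℝ) (m n r s : ℕ) : ℝ :=
  (1 - η) ^ 2 *
      (2 * ((m : ℝ) + n) * ((r : ℝ) + s) -
        ((1 - η ^ (r + s)) / (1 - η)) * ((m : ℝ) + n) -
        ((1 - η ^ (m + n)) / (1 - η)) * ((r : ℝ) + s)) +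
    1 - η ^ (m + n) - η ^ (r + s) + Tcoef η m r * Tcoef η n s -
    (1 - η) ^ 2 *
      ((s : ℝ) * ((m : ℝ) + n) * η ^ (r + s - 1) +
        (n : ℝ) * ((r : ℝ) + s) * η ^ (m + n - 1))

lemma Tcoef_term_nonneg (η : ℝ) (h0 : 0 ≤ η) (h1 : η ≤ 1) (a b k : ℕ) :
    0 ≤ (a.choose k : ℝ) * (b.choose k : ℝ) * (1 - η) ^ (2 * k) * η ^ (a + b - 2 * k) := by
  have hg : (0:ℝ) ≤ 1 - η := by linarith
  have := pow_nonneg hg (2 * k)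
  have := pow_nonneg h0 (a + b - 2 * k)
  positivity

lemma Tcoef_ge_base (η : ℝ) (h0 : 0 ≤ η) (h1 : η ≤ 1) (a b : ℕ) :
    η ^ (a + b) ≤ Tcoef η a b := by
  unfold Tcoef
  have h := Finset.single_le_sum
    (f := fun k => (a.choose k : ℝ) * (b.choose k : ℝ) * (1 - η) ^ (2 * k) * η ^ (a + b - 2 * k))
    (fun i _ => Tcoef_term_nonneg η h0 h1 a b i)
    (show 0 ∈ Finset.range (min a b + 1) by simp)
  simpa using h

lemma Tcoef_lb (η : ℝ) (h0 : 0 ≤ η) (h1 : η ≤ 1) (a b : ℕ) :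
    η ^ (a + b) + (a : ℝ) * b * (1 - η) ^ 2 * η ^ (a + b - 2) ≤ Tcoef η a b := by
  rcases Nat.eq_zero_or_pos a with ha | ha
  · subst ha; simpa using Tcoef_ge_base η h0 h1 0 b
  rcases Nat.eq_zero_or_pos b with hb | hb
  · subst hb; simpa using Tcoef_ge_base η h0 h1 a 0
  unfold Tcoef
  have hsub : ({0, 1} : Finset ℕ) ⊆ Finset.range (min a b + 1) := by
    intro k hk
    simp only [Finset.mem_insert, Finset.mem_singleton] at hk
    rcases hk with rfl | rfl <;> simp <;> try omega
  have hle := Finset.sum_le_sum_of_subset_of_nonneg hsub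
    (fun i _ _ => Tcoef_term_nonneg η h0 h1 a b i)
  have hpair : ∑ k ∈ ({0, 1} : Finset ℕ),
      (a.choose k : ℝ) * (b.choose k : ℝ) * (1 - η) ^ (2 * k) * η ^ (a + b - 2 * k)
      = η ^ (a + b) + (a : ℝ) * b * (1 - η) ^ 2 * η ^ (a + b - 2) := by
    rw [Finset.sum_pair (by norm_num : (0:ℕ) ≠ 1)]
    simp [Nat.choose_one_right]
  rw [hpair] at hle
  exact hle

lemma Tcoef_nonneg (η : ℝ) (h0 : 0 ≤ η) (h1 : η ≤ 1) (a b : ℕ) :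
    0 ≤ Tcoef η a b :=
  Finset.sum_nonneg fun i _ => Tcoef_term_nonneg η h0 h1 a b i

set_option maxHeartbeats 1000000 in
theorem Gamma_pos (η : ℝ) (hη : η ∈ Set.Ioo (0 : ℝ) 1)
    (m n r s : ℕ) (hmn : 2 ≤ m + n) (hrs : 2 ≤ r + s) :
    0 < Gamma η m n r s := by
  obtain ⟨h0, h1⟩ := hη
  have hg : (0:ℝ) < 1 - η := by linarith
  have hgne : (1:ℝ) - η ≠ 0 := ne_of_gt hg
  obtain ⟨M, hM⟩ : ∃ x : ℝ, x = (m : ℝ) := ⟨_, rfl⟩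
  obtain ⟨N, hN⟩ : ∃ x : ℝ, x = (n : ℝ) := ⟨_, rfl⟩
  obtain ⟨R, hR⟩ : ∃ x : ℝ, x = (r : ℝ) := ⟨_, rfl⟩
  obtain ⟨S, hS⟩ : ∃ x : ℝ, x = (s : ℝ) := ⟨_, rfl⟩
  obtain ⟨p, hp⟩ : ∃ x : ℝ, x = η ^ (m + n - 1) := ⟨_, rfl⟩
  obtain ⟨q, hq⟩ : ∃ x : ℝ, x = η ^ (r + s - 1) := ⟨_, rfl⟩
  have hp0 : 0 < p := hp ▸ pow_pos h0 _
  have hq0 : 0 < q := hq ▸ pow_pos h0 _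
  have hpη : p ≤ η := by
    have := pow_le_pow_of_le_one h0.le h1.le (show 1 ≤ m + n - 1 by omega)
    rw [hp]; simpa using this
  have hqη : q ≤ η := by
    have := pow_le_pow_of_le_one h0.le h1.le (show 1 ≤ r + s - 1 by omega)
    rw [hq]; simpa using this
  have heA : η ^ (m + n) = p * η := by
    rw [hp, ← pow_succ]; congr 1; omega
  have heB : η ^ (r + s) = q * η := by
    rw [hq, ← pow_succ]; congr 1; omega
  -- Bernoulli bounds
  have hu : 1 - p * η ≤ (M + N) * (1 - η) := by
    have hb := one_add_mul_le_pow (show (-2:ℝ) ≤ η - 1 by linarith) (m + n)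
    have he : (1 + (η - 1)) ^ (m + n) = p * η := by
      rw [show (1:ℝ) + (η - 1) = η by ring, heA]
    rw [he] at hb
    rw [hM, hN]
    push_cast at hb ⊢
    linarith
  have hv : 1 - q * η ≤ (R + S) * (1 - η) := by
    have hb := one_add_mul_le_pow (show (-2:ℝ) ≤ η - 1 by linarith) (r + s)
    have he : (1 + (η - 1)) ^ (r + s) = q * η := by
      rw [show (1:ℝ) + (η - 1) = η by ring, heB]
    rw [he] at hb
    rw [hR, hS]
    push_cast at hb ⊢
    linarith
  -- product of Tcoef lower bounds
  have hT1 := Tcoef_lb η h0.le h1.le m r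
  have hT2 := Tcoef_lb η h0.le h1.le n s
  rw [← hM, ← hR] at hT1
  rw [← hN, ← hS] at hT2
  have hM0 : (0:ℝ) ≤ M := hM ▸ Nat.cast_nonneg m
  have hN0 : (0:ℝ) ≤ N := hN ▸ Nat.cast_nonneg n
  have hR0 : (0:ℝ) ≤ R := hR ▸ Nat.cast_nonneg r
  have hS0 : (0:ℝ) ≤ S := hS ▸ Nat.cast_nonneg s
  have hx1 : (0:ℝ) ≤ η ^ (m + r) + M * R * (1 - η) ^ 2 * η ^ (m + r - 2) := by positivity
  have hx2 : (0:ℝ) ≤ η ^ (n + s) + N * S * (1 - η) ^ 2 * η ^ (n + s - 2) := by positivity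
  have hTprod : (η ^ (m + r) + M * R * (1 - η) ^ 2 * η ^ (m + r - 2)) *
      (η ^ (n + s) + N * S * (1 - η) ^ 2 * η ^ (n + s - 2))
      ≤ Tcoef η m r * Tcoef η n s :=
    mul_le_mul hT1 hT2 hx2 (le_trans hx1 hT1)
  have e0 : η ^ (m + r) * η ^ (n + s) = p * q * η ^ 2 := by
    rw [← pow_add, show m + r + (n + s) = (m + n) + (r + s) from by omega, pow_add, heA, heB]
    ring
  have e1 : M * R * ((1 - η) ^ 2 * (η ^ (m + r - 2) * η ^ (n + s))) =
      M * R * ((1 - η) ^ 2 * (p * q)) := by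
    rcases Nat.eq_zero_or_pos (m * r) with hz | hz
    · have hz0 : M * R = 0 := by
        rcases Nat.mul_eq_zero.mp hz with h | h <;> simp [hM, hN, hR, hS, h]
      rw [hz0]; ring
    · have hm1 : m ≠ 0 := by rintro rfl; simp at hz
      have hr1 : r ≠ 0 := by rintro rfl; simp at hz
      congr 2
      rw [← pow_add, hp, hq, ← pow_add]
      congr 1; omega
  have e2 : N * S * ((1 - η) ^ 2 * (η ^ (n + s - 2) * η ^ (m + r))) =
      N * S * ((1 - η) ^ 2 * (p * q)) := by
    rcases Nat.eq_zero_or_pos (n * s) with hz | hz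
    · have hz0 : N * S = 0 := by
        rcases Nat.mul_eq_zero.mp hz with h | h <;> simp [hM, hN, hR, hS, h]
      rw [hz0]; ring
    · have hn1 : n ≠ 0 := by rintro rfl; simp at hz
      have hs1 : s ≠ 0 := by rintro rfl; simp at hz
      congr 2
      rw [← pow_add, hp, hq, ← pow_add]
      congr 1; omega
  have hT : p * q * η ^ 2 + (M * R + N * S) * (1 - η) ^ 2 * (p * q)
      ≤ Tcoef η m r * Tcoef η n s := by
    have hyy : (0:ℝ) ≤ (M * R * (1 - η) ^ 2 * η ^ (m + r - 2)) *
        (N * S * (1 - η) ^ 2 * η ^ (n + s - 2)) := by positivity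
    nlinarith [hTprod, e0, e1, e2]
  -- rewrite Gamma
  have hG : Gamma η m n r s =
      2 * (M + N) * (R + S) * (1 - η) ^ 2 - (M + N) * (1 - η) * (1 - q * η)
      - (R + S) * (1 - η) * (1 - p * η) + 1 - p * η - q * η
      + Tcoef η m r * Tcoef η n s
      - (1 - η) ^ 2 * (S * (M + N) * q + N * (R + S) * p) := by
    unfold Gamma
    rw [heA, heB, ← hp, ← hq, ← hM, ← hN, ← hR, ← hS]
    field_simp
  rw [hG]
  have hprod1 : 0 ≤ ((M + N) * (1 - η) - (1 - p * η)) * ((R + S) * (1 - η) - (1 - q * η)) :=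
    mul_nonneg (by linarith) (by linarith)
  have hMN : (2:ℝ) ≤ M + N := by rw [hM, hN]; exact_mod_cast hmn
  have hRS : (2:ℝ) ≤ R + S := by rw [hR, hS]; exact_mod_cast hrs
  have hp1 : p < 1 := by linarith
  have hq1 : q < 1 := by linarith
  have hbr : (M + N) * (R + S) * (1 - p) * (1 - q) ≤
      M * R * (1 + p * q) + M * S * (1 - q) + N * R * (1 - p) + N * S * (1 - p) * (1 - q) := by
    have key : M * R * (1 + p * q) + M * S * (1 - q) + N * R * (1 - p)
        + N * S * (1 - p) * (1 - q) - (M + N) * (R + S) * (1 - p) * (1 - q)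
        = M * R * (p + q) + M * S * (p * (1 - q)) + N * R * (q * (1 - p)) := by ring
    have t1 : 0 ≤ M * R * (p + q) :=
      mul_nonneg (mul_nonneg hM0 hR0) (by linarith)
    have t2 : 0 ≤ M * S * (p * (1 - q)) :=
      mul_nonneg (mul_nonneg hM0 hS0) (mul_nonneg hp0.le (by linarith))
    have t3 : 0 ≤ N * R * (q * (1 - p)) :=
      mul_nonneg (mul_nonneg hN0 hR0) (mul_nonneg hq0.le (by linarith))
    linarith
  have hbr2 : (1 - η) ^ 2 * ((M + N) * (R + S) * (1 - p) * (1 - q)) ≤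
      (1 - η) ^ 2 * (M * R * (1 + p * q) + M * S * (1 - q) + N * R * (1 - p)
        + N * S * (1 - p) * (1 - q)) :=
    mul_le_mul_of_nonneg_left hbr (by positivity)
  have hpos : 0 < (1 - η) ^ 2 * ((M + N) * (R + S) * (1 - p) * (1 - q)) := by
    have h4 : (0:ℝ) < (M + N) * (R + S) := by nlinarith
    have hpp : (0:ℝ) < 1 - p := by linarith
    have hqq : (0:ℝ) < 1 - q := by linarith
    positivity
  linarith [hT, hprod1, hbr2, hpos]
end
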